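/- Let a: E → [λ,1] (λ>0) be a symmetric coefficient field on the edges of Z^d, let φ, φ^b : Z^d → R solve the discrete corrector-type equations −∇*·a(∇φ + e) = 0 and −∇*·a^b(∇φ^b + e) = 0 where a^b differs from a only on the single edge b = (z_b, z_b+e_b), and assume the difference φ^b − φ has square-summable gradient. Then the energy estimate holds: Σ_{x∈Z^d} |∇(φ^b−φ)(x)|² ≤ C(λ) |∇φ(z_b) + e|², and in particular |∇φ^b(z_b) + e| ≤ C(λ) |∇φ(z_b) + e|. -/

import Mathlib

/-!
Put `u = φ^b - φ`. Subtracting the two corrector equations shows that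
`V = a^b (∇φ^b + e) - a (∇φ + e) = a^b ∇u + (a^b - a)(∇φ + e)` is divergence free, and the
second term lives on the single edge `b`. If `V` is orthogonal to `∇u`, then
`λ ‖∇u‖² ≤ Σ a^b |∇u|² = -(a^b - a)(b) (∇φ + e)(b) ∇u(b) ≤ |∇φ(z_b) + e| ‖∇u‖`,
which is the energy estimate; the pointwise bound at `z_b` follows from it.

The orthogonality needs an argument because `u` itself need not be square summable. In `ℓ²` of
the edges, the curl-free fields form a closed subspace `H` containing the gradients of point
masses. A field in `H` orthogonal to all of those is divergence free as well, so each of its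
components is a square-summable harmonic function, which vanishes by summation by parts. Hence the
divergence-free field `V` is orthogonal to all of `H`, in particular to `∇u`.
-/

/-- `φ` solves the discrete corrector equation `-∇*·a(∇φ + e) = 0` on `ℤ^d`, for the diagonal
coefficient field `a` (with `a x i` the conductance of the edge `(x, x+e_i)`). -/
def solvesCorrector {d : ℕ} (a : (Fin d → ℤ) → Fin d → ℝ)
    (φ : (Fin d → ℤ) → ℝ) (e : Fin d → ℝ) : Prop :=
  ∀ x : Fin d → ℤ,
    ∑ i : Fin d,
      (a x i * ((φ (x + Pi.single i 1) - φ x) + e i)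
        - a (x - Pi.single i 1) i * ((φ x - φ (x - Pi.single i 1)) + e i)) = 0

open scoped InnerProductSpace

noncomputable section

namespace SingleEdge

section

variable {G : Type*} [AddGroup G]

theorem hasSum_sub_comp_add_right {g : G → ℝ} (hg : Summable g) (s : G) :
    HasSum (fun x => g x - g (x + s)) 0 := by
  simpa using hg.hasSum.sub ((Equiv.addRight s).hasSum_iff.mpr hg.hasSum)

theorem summable_mul_comp_sub {h : G → ℝ} (hh : Summable fun x => h x ^ 2) (s : G) :
    Summable fun x => h x * h (x - s) := by
  have hs : Summable fun x => h (x - s) ^ 2 := (Equiv.subRight s).summable_iff.mpr hh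
  refine (hh.add hs).of_norm_bounded fun x => ?_
  rw [Real.norm_eq_abs, abs_mul]
  nlinarith [sq_abs (h x), sq_abs (h (x - s)), sq_nonneg (|h x| - |h (x - s)|)]

/-- Summation by parts in direction `s`: the summand is `g x - g (x + s)` with
`g x = h x * h (x - s) - h x ^ 2`. -/
theorem hasSum_mul_secondDiff_add_sq {h : G → ℝ} (hh : Summable fun x => h x ^ 2) (s : G) :
    HasSum (fun x => h x * (h (x + s) - 2 * h x + h (x - s)) + (h (x + s) - h x) ^ 2) 0 := by
  convert hasSum_sub_comp_add_right ((summable_mul_comp_sub hh s).sub hh) s using 2 with x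
  simp only [add_sub_cancel_right]
  ring

end

theorem memℓp_two_iff_summable_sq {ι : Type*} {f : ι → ℝ} :
    Memℓp f 2 ↔ Summable fun i => f i ^ 2 := by
  rw [memℓp_gen_iff (by norm_num)]
  simp

theorem mem_orthogonal_of_forall_inner_eq_zero {𝕜 E : Type*} [RCLike 𝕜] [NormedAddCommGroup E]
    [InnerProductSpace 𝕜 E] {H : Submodule 𝕜 E} [H.HasOrthogonalProjection] {S : Set E}
    (hSH : S ⊆ H) (hS : ∀ w ∈ H, (∀ s ∈ S, ⟪s, w⟫_𝕜 = 0) → w = 0) {v : E}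
    (hv : ∀ s ∈ S, ⟪s, v⟫_𝕜 = 0) : v ∈ Hᗮ := by
  have hvw : v - H.starProjection v ∈ Hᗮ := H.sub_starProjection_mem_orthogonal v
  have hw : H.starProjection v = 0 := by
    refine hS _ (H.starProjection_apply_mem v) fun s hs => ?_
    have := H.inner_right_of_mem_orthogonal (hSH hs) hvw
    rwa [inner_sub_right, hv s hs, zero_sub, neg_eq_zero] at this
  simpa [hw] using hvw

theorem tsum_sq_le_of_hasSum_mul_sq {ι : Type*} {c F : ι → ℝ} {lam g : ℝ} (q : ι) (hlam : 0 < lam)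
    (hc : ∀ p, lam ≤ c p) (hF : Summable fun p => F p ^ 2)
    (hcF : HasSum (fun p => c p * F p ^ 2) (g * F q)) :
    ∑' p, F p ^ 2 ≤ g ^ 2 / lam ^ 2 := by
  set T := ∑' p, F p ^ 2
  have hT : 0 ≤ T := tsum_nonneg fun p => sq_nonneg _
  have hlamT : lam * T ≤ g * F q :=
    hasSum_le (fun p => mul_le_mul_of_nonneg_right (hc p) (sq_nonneg _))
      (hF.hasSum.mul_left lam) hcF
  have hFq : F q ^ 2 ≤ T := hF.le_tsum q fun p _ => sq_nonneg _
  have hsq : (lam * T) ^ 2 ≤ g ^ 2 * T := by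
    calc (lam * T) ^ 2 ≤ (g * F q) ^ 2 := pow_le_pow_left₀ (by positivity) hlamT 2
      _ = g ^ 2 * F q ^ 2 := mul_pow _ _ _
      _ ≤ g ^ 2 * T := by gcongr
  rw [le_div_iff₀ (by positivity)]
  rcases hT.eq_or_lt with hT0 | hTpos
  · rw [← hT0, zero_mul]
    positivity
  · nlinarith

theorem hasSum_of_summable_sum_fiberwise {α β : Type*} [Fintype β] {f : α × β → ℝ} (hf : 0 ≤ f)
    (h : Summable fun a => ∑ b, f (a, b)) : HasSum f (∑' a, ∑ b, f (a, b)) := by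
  have hs : Summable f :=
    (summable_prod_of_nonneg hf).2 ⟨fun _ => .of_finite, by simpa only [tsum_fintype] using h⟩
  rw [(hs.hasSum.prod_fiberwise fun a => hasSum_fintype _).tsum_eq]
  exact hs.hasSum

variable {d : ℕ}

def laplacian (h : (Fin d → ℤ) → ℝ) (x : Fin d → ℤ) : ℝ :=
  ∑ j, (h (x + Pi.single j 1) - 2 * h x + h (x - Pi.single j 1))

theorem periodic_of_laplacian_eq_zero {h : (Fin d → ℤ) → ℝ} (hh : Summable fun x => h x ^ 2)
    (hΔ : ∀ x, laplacian h x = 0) (j : Fin d) : Function.Periodic h (Pi.single j 1) := by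
  have hsum : HasSum (fun x => ∑ j, (h (x + Pi.single j 1) - h x) ^ 2) 0 := by
    have := hasSum_sum (s := Finset.univ) fun j _ =>
      hasSum_mul_secondDiff_add_sq hh (Pi.single j (1 : ℤ))
    rw [Finset.sum_const_zero] at this
    convert this using 2 with x
    rw [Finset.sum_add_distrib, ← Finset.mul_sum, ← laplacian, hΔ, mul_zero, zero_add]
  intro x
  have hx := congrFun ((hasSum_zero_iff_of_nonneg fun x => by positivity).mp hsum) x
  have := (Finset.sum_eq_zero_iff_of_nonneg fun j _ => sq_nonneg _).mp hx j (Finset.mem_univ j)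
  simpa [sub_eq_zero] using this

theorem eq_zero_of_laplacian_eq_zero (hd : 0 < d) {h : (Fin d → ℤ) → ℝ}
    (hh : Summable fun x => h x ^ 2) (hΔ : ∀ x, laplacian h x = 0) : h = 0 := by
  funext x
  let j : Fin d := ⟨0, hd⟩
  have hinj : Function.Injective fun n : ℤ => x + n • (Pi.single j 1 : Fin d → ℤ) := by
    intro m n hmn
    simpa using congrFun hmn j
  have hconst : Summable fun _ : ℤ => h x ^ 2 := by
    refine (hh.comp_injective hinj).congr fun n => ?_
    rw [Function.comp_apply, (periodic_of_laplacian_eq_zero hh hΔ j).zsmul n x]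
  simpa using (summable_const_iff _).mp hconst

def grad (ψ : (Fin d → ℤ) → ℝ) (p : (Fin d → ℤ) × Fin d) : ℝ :=
  ψ (p.1 + Pi.single p.2 1) - ψ p.1

def divergence (V : (Fin d → ℤ) × Fin d → ℝ) (x : Fin d → ℤ) : ℝ :=
  ∑ i, (V (x, i) - V (x - Pi.single i 1, i))

def curl (V : (Fin d → ℤ) × Fin d → ℝ) (x : Fin d → ℤ) (i j : Fin d) : ℝ :=
  V (x, i) + V (x + Pi.single i 1, j) - V (x, j) - V (x + Pi.single j 1, i)

theorem grad_sub (ψ ψ' : (Fin d → ℤ) → ℝ) : grad (ψ - ψ') = grad ψ - grad ψ' := by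
  funext p
  simp only [grad, Pi.sub_apply]
  ring

theorem divergence_sub (V W : (Fin d → ℤ) × Fin d → ℝ) (x : Fin d → ℤ) :
    divergence (V - W) x = divergence V x - divergence W x := by
  simp only [divergence, Pi.sub_apply, ← Finset.sum_sub_distrib]
  exact Finset.sum_congr rfl fun i _ => by ring

theorem curl_grad (ψ : (Fin d → ℤ) → ℝ) (x : Fin d → ℤ) (i j : Fin d) :
    curl (grad ψ) x i j = 0 := by
  simp only [curl, grad, add_right_comm x (Pi.single i 1)]
  ring

theorem laplacian_eq_of_curl_eq_zero {V : (Fin d → ℤ) × Fin d → ℝ}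
    (hV : ∀ x i j, curl V x i j = 0) (i : Fin d) (x : Fin d → ℤ) :
    laplacian (fun y => V (y, i)) x = divergence V (x + Pi.single i 1) - divergence V x := by
  simp only [laplacian, divergence, ← Finset.sum_sub_distrib]
  refine Finset.sum_congr rfl fun j _ => ?_
  have h₁ := hV x j i
  have h₂ := hV (x - Pi.single j 1) j i
  have e₁ : x - Pi.single j 1 + Pi.single j 1 = x := sub_add_cancel _ _
  have e₂ : x - Pi.single j 1 + Pi.single i 1 = x + Pi.single i 1 - Pi.single j 1 := by abel
  simp only [curl, e₁, e₂] at h₁ h₂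
  linarith

abbrev EdgeL2 (d : ℕ) := lp (fun _ : (Fin d → ℤ) × Fin d => ℝ) 2

def curlCLM : EdgeL2 d →L[ℝ] ((Fin d → ℤ) → Fin d → Fin d → ℝ) :=
  let ev := lp.evalCLM ℝ (fun _ : (Fin d → ℤ) × Fin d => ℝ) 2
  .pi fun x => .pi fun i => .pi fun j =>
    ev (x, i) + ev (x + Pi.single i 1, j) - ev (x, j) - ev (x + Pi.single j 1, i)

def curlFree (d : ℕ) : Submodule ℝ (EdgeL2 d) :=
  (curlCLM (d := d)).toLinearMap.ker

theorem mem_curlFree {f : EdgeL2 d} : f ∈ curlFree d ↔ ∀ x i j, curl f x i j = 0 := by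
  simp only [curlFree, LinearMap.mem_ker, funext_iff]
  rfl

instance : (curlFree d).HasOrthogonalProjection := by
  have : IsClosed (curlFree d : Set (EdgeL2 d)) := ContinuousLinearMap.isClosed_ker _
  have := this.completeSpace_coe
  exact .ofCompleteSpace _

def gradSingle (y : Fin d → ℤ) : EdgeL2 d :=
  ∑ i, (lp.single 2 (y - Pi.single i 1, i) 1 - lp.single 2 (y, i) 1)

theorem coe_gradSingle (y : Fin d → ℤ) : ⇑(gradSingle y) = grad (Pi.single y 1) := by
  funext ⟨x, j⟩
  simp only [gradSingle, lp.coeFn_sum, lp.coeFn_sub, lp.coeFn_single, Finset.sum_apply,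
    Pi.sub_apply, grad]
  rw [Finset.sum_eq_single j]
  · simp [Pi.single_apply, eq_sub_iff_add_eq]
  · intro i _ hij
    simp [Prod.ext_iff, Ne.symm hij]
  · simp

theorem inner_gradSingle (y : Fin d → ℤ) (f : EdgeL2 d) :
    ⟪gradSingle y, f⟫_ℝ = -divergence f y := by
  simp [gradSingle, sum_inner, inner_sub_left, lp.inner_single_left, divergence]

theorem gradSingle_mem_curlFree (y : Fin d → ℤ) : gradSingle y ∈ curlFree d :=
  mem_curlFree.2 fun x i j => by rw [coe_gradSingle]; exact curl_grad _ x i j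

theorem eq_zero_of_mem_curlFree {W : EdgeL2 d} (hcurl : W ∈ curlFree d)
    (hdiv : ∀ y, divergence W y = 0) : W = 0 := by
  ext ⟨x, i⟩
  have hΔ : ∀ y, laplacian (fun y => W (y, i)) y = 0 := fun y => by
    rw [laplacian_eq_of_curl_eq_zero (mem_curlFree.1 hcurl), hdiv, hdiv, sub_self]
  have hsq : Summable fun y => W (y, i) ^ 2 :=
    (memℓp_two_iff_summable_sq.1 (lp.memℓp W)).comp_injective (Prod.mk_left_injective i)
  exact congrFun (eq_zero_of_laplacian_eq_zero i.pos hsq hΔ) x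

theorem hasSum_mul_grad_eq_zero {V : (Fin d → ℤ) × Fin d → ℝ} (hV : Memℓp V 2)
    (hdiv : ∀ y, divergence V y = 0) {u : (Fin d → ℤ) → ℝ} (hu : Memℓp (grad u) 2) :
    HasSum (fun p => V p * grad u p) 0 := by
  let V' : EdgeL2 d := ⟨V, hV⟩
  let F : EdgeL2 d := ⟨grad u, hu⟩
  have hF : F ∈ curlFree d := mem_curlFree.2 (curl_grad u)
  have hV' : V' ∈ (curlFree d)ᗮ := by
    refine mem_orthogonal_of_forall_inner_eq_zero (S := Set.range gradSingle)
      (Set.range_subset_iff.2 gradSingle_mem_curlFree) (fun w hw hS => ?_) ?_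
    · refine eq_zero_of_mem_curlFree hw fun y => ?_
      simpa [inner_gradSingle] using hS _ ⟨y, rfl⟩
    · rintro _ ⟨y, rfl⟩
      rw [inner_gradSingle]
      simp [V', hdiv]
  simpa [(curlFree d).inner_right_of_mem_orthogonal hF hV'] using lp.hasSum_inner (𝕜 := ℝ) F V'

def flux (a : (Fin d → ℤ) → Fin d → ℝ) (ψ : (Fin d → ℤ) → ℝ) (e : Fin d → ℝ)
    (p : (Fin d → ℤ) × Fin d) : ℝ :=
  a p.1 p.2 * (grad ψ p + e p.2)

theorem divergence_flux_eq_zero {a : (Fin d → ℤ) → Fin d → ℝ} {ψ : (Fin d → ℤ) → ℝ}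
    {e : Fin d → ℝ} (h : solvesCorrector a ψ e) (x : Fin d → ℤ) :
    divergence (flux a ψ e) x = 0 := by
  simpa [divergence, flux, grad] using h x

theorem hasSum_mul_sq_grad_sub {a a₂ : (Fin d → ℤ) → Fin d → ℝ} (ha₂ : ∀ x i, |a₂ x i| ≤ 1)
    {z : Fin d → ℤ} {k : Fin d} (hedge : ∀ x i, ¬(x = z ∧ i = k) → a₂ x i = a x i)
    {e : Fin d → ℝ} {φ φ₂ : (Fin d → ℤ) → ℝ} (hφ : solvesCorrector a φ e)
    (hφ₂ : solvesCorrector a₂ φ₂ e) (hF : Memℓp (grad (φ₂ - φ)) 2) :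
    HasSum (fun p => a₂ p.1 p.2 * grad (φ₂ - φ) p ^ 2)
      ((a z k - a₂ z k) * (grad φ (z, k) + e k) * grad (φ₂ - φ) (z, k)) := by
  set F := grad (φ₂ - φ)
  set D : (Fin d → ℤ) × Fin d → ℝ := fun p => (a₂ p.1 p.2 - a p.1 p.2) * (grad φ p + e p.2)
  have hD : ∀ p ≠ (z, k), D p = 0 := by
    rintro ⟨x, i⟩ hp
    simp [D, hedge x i (by simpa [Prod.ext_iff] using hp)]
  have hV : flux a₂ φ₂ e - flux a φ e = fun p => a₂ p.1 p.2 * F p + D p := by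
    funext p
    simp only [F, D, flux, grad_sub, Pi.sub_apply]
    ring
  have hVmem : Memℓp (flux a₂ φ₂ e - flux a φ e) 2 := by
    rw [hV]
    refine .add (hF.norm.mono fun p => ?_) (memℓp_two_iff_summable_sq.2 ?_)
    · rw [norm_mul]
      exact mul_le_of_le_one_left (norm_nonneg _) (ha₂ p.1 p.2)
    · exact (hasSum_single (z, k) fun p hp => by simp [hD p hp]).summable
  have horth : HasSum (fun p => (flux a₂ φ₂ e - flux a φ e) p * F p) 0 :=
    hasSum_mul_grad_eq_zero hVmem (fun y => by
      rw [divergence_sub, divergence_flux_eq_zero hφ₂, divergence_flux_eq_zero hφ, sub_zero]) hF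
  have hDF : HasSum (fun p => D p * F p) (D (z, k) * F (z, k)) :=
    hasSum_single (z, k) fun p hp => by simp [hD p hp]
  have hpt : (fun p => a₂ p.1 p.2 * F p ^ 2)
      = fun p => (a₂ p.1 p.2 * F p + D p) * F p - D p * F p := by
    funext p
    ring
  rw [hV] at horth
  rw [hpt, show (a z k - a₂ z k) * (grad φ (z, k) + e k) * F (z, k) = 0 - D (z, k) * F (z, k) by
    simp only [D]; ring]
  exact horth.sub hDF

theorem tsum_sum_sq_grad_sub_le {lam : ℝ} (hlam : 0 < lam) {a a₂ : (Fin d → ℤ) → Fin d → ℝ}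
    (ha : ∀ x i, lam ≤ a x i ∧ a x i ≤ 1) (ha₂ : ∀ x i, lam ≤ a₂ x i ∧ a₂ x i ≤ 1)
    {z : Fin d → ℤ} {k : Fin d} (hedge : ∀ x i, ¬(x = z ∧ i = k) → a₂ x i = a x i)
    {e : Fin d → ℝ} {φ φ₂ : (Fin d → ℤ) → ℝ} (hφ : solvesCorrector a φ e)
    (hφ₂ : solvesCorrector a₂ φ₂ e)
    (hsum : Summable fun x => ∑ i, (grad φ₂ (x, i) - grad φ (x, i)) ^ 2) :
    ∑' x, ∑ i, (grad φ₂ (x, i) - grad φ (x, i)) ^ 2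
      ≤ (∑ i, (grad φ (z, i) + e i) ^ 2) / lam ^ 2 := by
  have hF := hasSum_of_summable_sum_fiberwise (f := fun p => grad (φ₂ - φ) p ^ 2)
    (fun p => sq_nonneg _) (by simpa only [grad_sub, Pi.sub_apply] using hsum)
  have hcoef : ((a z k - a₂ z k) * (grad φ (z, k) + e k)) ^ 2 ≤ (grad φ (z, k) + e k) ^ 2 := by
    rw [mul_pow]
    exact mul_le_of_le_one_left (sq_nonneg _) (by nlinarith [ha z k, ha₂ z k])
  have ha₂abs : ∀ x i, |a₂ x i| ≤ 1 := fun x i =>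
    abs_le.2 ⟨by linarith [(ha₂ x i).1], (ha₂ x i).2⟩
  calc ∑' x, ∑ i, (grad φ₂ (x, i) - grad φ (x, i)) ^ 2
      = ∑' p, grad (φ₂ - φ) p ^ 2 := by
        rw [hF.tsum_eq]
        simp only [grad_sub, Pi.sub_apply]
    _ ≤ ((a z k - a₂ z k) * (grad φ (z, k) + e k)) ^ 2 / lam ^ 2 :=
      tsum_sq_le_of_hasSum_mul_sq (z, k) hlam (fun p => (ha₂ p.1 p.2).1) hF.summable
        (hasSum_mul_sq_grad_sub ha₂abs hedge hφ hφ₂ (memℓp_two_iff_summable_sq.2 hF.summable))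
    _ ≤ (∑ i, (grad φ (z, i) + e i) ^ 2) / lam ^ 2 := by
      gcongr
      exact hcoef.trans (Finset.single_le_sum (f := fun i => (grad φ (z, i) + e i) ^ 2)
        (fun i _ => sq_nonneg _) (Finset.mem_univ k))

theorem sum_sq_grad_add_le (φ φ₂ : (Fin d → ℤ) → ℝ) (e : Fin d → ℝ) (z : Fin d → ℤ) :
    ∑ i, (grad φ₂ (z, i) + e i) ^ 2
      ≤ 2 * ∑ i, (grad φ₂ (z, i) - grad φ (z, i)) ^ 2 + 2 * ∑ i, (grad φ (z, i) + e i) ^ 2 := by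
  rw [Finset.mul_sum, Finset.mul_sum, ← Finset.sum_add_distrib]
  exact Finset.sum_le_sum fun i _ => by
    nlinarith [sq_nonneg (grad φ₂ (z, i) - grad φ (z, i) - (grad φ (z, i) + e i))]

end SingleEdge

end

open SingleEdge

/-- **Energy estimate for a single-edge perturbation:** if `φ` and `φ^b` solve the corrector
equations for coefficient fields `a, a^b ∈ [λ,1]` differing only on the edge `b = (z, z+e_k)`,
and `∇(φ^b - φ)` is square-summable, then
`Σ_x |∇(φ^b - φ)(x)|² ≤ C(λ) |∇φ(z) + e|²`, and in particular
`|∇φ^b(z) + e|² ≤ C(λ) |∇φ(z) + e|²`. -/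
theorem single_edge_energy_estimate (lam : ℝ) (hlam : 0 < lam) :
    ∃ C : ℝ, 0 < C ∧
      ∀ (d : ℕ) (a a₂ : (Fin d → ℤ) → Fin d → ℝ),
        (∀ x i, lam ≤ a x i ∧ a x i ≤ 1) →
        (∀ x i, lam ≤ a₂ x i ∧ a₂ x i ≤ 1) →
        ∀ (z : Fin d → ℤ) (k : Fin d),
        (∀ (x : Fin d → ℤ) (i : Fin d), ¬(x = z ∧ i = k) → a₂ x i = a x i) →
        ∀ (e : Fin d → ℝ) (φ φ₂ : (Fin d → ℤ) → ℝ),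
        solvesCorrector a φ e → solvesCorrector a₂ φ₂ e →
        Summable (fun x : Fin d → ℤ => ∑ i : Fin d,
          ((φ₂ (x + Pi.single i 1) - φ₂ x) - (φ (x + Pi.single i 1) - φ x)) ^ 2) →
        (∑' x : Fin d → ℤ, ∑ i : Fin d,
            ((φ₂ (x + Pi.single i 1) - φ₂ x) - (φ (x + Pi.single i 1) - φ x)) ^ 2
          ≤ C * ∑ i : Fin d, ((φ (z + Pi.single i 1) - φ z) + e i) ^ 2)
        ∧ ∑ i : Fin d, ((φ₂ (z + Pi.single i 1) - φ₂ z) + e i) ^ 2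
          ≤ C * ∑ i : Fin d, ((φ (z + Pi.single i 1) - φ z) + e i) ^ 2 := by
  refine ⟨2 / lam ^ 2 + 2, by positivity, fun d a a₂ ha ha₂ z k hedge e φ φ₂ hφ hφ₂ hsum => ?_⟩
  show (∑' x, ∑ i, (grad φ₂ (x, i) - grad φ (x, i)) ^ 2 ≤ _ * ∑ i, (grad φ (z, i) + e i) ^ 2)
    ∧ ∑ i, (grad φ₂ (z, i) + e i) ^ 2 ≤ _ * ∑ i, (grad φ (z, i) + e i) ^ 2
  set A := ∑ i, (grad φ (z, i) + e i) ^ 2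
  have hT := tsum_sum_sq_grad_sub_le hlam ha ha₂ hedge hφ hφ₂ hsum
  have hz : ∑ i, (grad φ₂ (z, i) - grad φ (z, i)) ^ 2
      ≤ ∑' x, ∑ i, (grad φ₂ (x, i) - grad φ (x, i)) ^ 2 :=
    hsum.le_tsum z fun x _ => Finset.sum_nonneg fun i _ => sq_nonneg _
  have hA : 0 ≤ A := Finset.sum_nonneg fun i _ => sq_nonneg _
  have hAlam : 0 ≤ A / lam ^ 2 := by positivity
  have hC : (2 / lam ^ 2 + 2) * A = 2 * (A / lam ^ 2) + 2 * A := by ring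
  exact ⟨by linarith, by linarith [sum_sq_grad_add_le φ φ₂ e z]⟩
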